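/- Along any solution x(t) of a mass-action system admitting a complex-balanced steady state x*, the time derivative of L(x) = ∑ᵢ xᵢ(ln xᵢ − ln xᵢ* − 1) is d/dt L(x(t)) = ∑_{y→y'} k_{y→y'} x^y ⟨ln x − ln x*, y' − y⟩, and this quantity is ≤ 0 for all x ∈ ℝ^n_{>0}. -/

import Mathlib

/-!
Writing `u = ln z − ln x*`, each reaction contributes `κ_r e^{⟨u, y⟩} ⟨u, y' − y⟩`, where
`κ_r = k_r (x*)^y` is its equilibrium flux. By `e^a (b − a) ≤ e^b − e^a` the sum is at most
`∑_r κ_r e^{⟨u, y'⟩} − ∑_r κ_r e^{⟨u, y⟩}`, and complex balance says exactly that `κ` has the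
same total on each complex counted as a source as counted as a target, so this difference
vanishes. The derivative formula is the chain rule, since `d/ds (s (ln s − c − 1)) = ln s − c`.
-/

open Finset Real

theorem Real.exp_mul_sub_le_exp_sub_exp (a b : ℝ) : exp a * (b - a) ≤ exp b - exp a := by
  have h := mul_le_mul_of_nonneg_left (add_one_le_exp (b - a)) (exp_nonneg a)
  rw [← exp_add, add_sub_cancel] at h
  linarith

theorem Finset.sum_mul_comp_eq_of_fiber_sums_eq {R Y M : Type*} [Fintype R] [DecidableEq Y]
    [CommSemiring M] (g h : R → Y) (w : R → M)
    (hw : ∀ y, ∑ r, (if g r = y then w r else 0) = ∑ r, (if h r = y then w r else 0))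
    (F : Y → M) : ∑ r, w r * F (g r) = ∑ r, w r * F (h r) := by
  have hfiber : ∀ g' : R → Y, (∀ r, g' r ∈ univ.image g ∪ univ.image h) →
      ∑ r, w r * F (g' r) = ∑ y ∈ univ.image g ∪ univ.image h,
        F y * ∑ r, (if g' r = y then w r else 0) := by
    intro g' hg'
    rw [← sum_fiberwise_of_maps_to (fun r _ => hg' r)]
    refine sum_congr rfl fun y _ => ?_
    rw [← sum_filter, mul_sum]
    exact sum_congr rfl fun r hr => by rw [(mem_filter.1 hr).2, mul_comm]
  rw [hfiber g (by simp), hfiber h (by simp)]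
  simp only [hw]

theorem sum_mul_exp_mul_sub_nonpos_of_fiber_sums_eq {R Y : Type*} [Fintype R] [DecidableEq Y]
    (src tgt : R → Y) (κ : R → ℝ) (hκ : ∀ r, 0 ≤ κ r)
    (hbal : ∀ y, ∑ r, (if src r = y then κ r else 0) = ∑ r, (if tgt r = y then κ r else 0))
    (φ : Y → ℝ) : ∑ r, κ r * (exp (φ (src r)) * (φ (tgt r) - φ (src r))) ≤ 0 := by
  calc ∑ r, κ r * (exp (φ (src r)) * (φ (tgt r) - φ (src r)))
      ≤ ∑ r, κ r * (exp (φ (tgt r)) - exp (φ (src r))) :=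
        sum_le_sum fun r _ => mul_le_mul_of_nonneg_left (exp_mul_sub_le_exp_sub_exp _ _) (hκ r)
    _ = ∑ r, κ r * exp (φ (tgt r)) - ∑ r, κ r * exp (φ (src r)) := by
        simp only [mul_sub, sum_sub_distrib]
    _ = 0 := by
        rw [← sum_mul_comp_eq_of_fiber_sums_eq src tgt κ hbal (fun y => exp (φ y)), sub_self]

theorem prod_rpow_eq_prod_rpow_mul_exp {ι : Type*} [Fintype ι] {z w : ι → ℝ}
    (hz : ∀ i, 0 < z i) (hw : ∀ i, 0 < w i) (y : ι → ℝ) :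
    ∏ i, z i ^ y i = (∏ i, w i ^ y i) * exp (∑ i, (log (z i) - log (w i)) * y i) := by
  simp only [rpow_def_of_pos (hz _), rpow_def_of_pos (hw _), ← exp_sum, ← exp_add,
    ← sum_add_distrib]
  congr 1
  exact sum_congr rfl fun i _ => by ring

theorem hasDerivAt_mul_log_sub_sub_one {x : ℝ} (hx : x ≠ 0) (c : ℝ) :
    HasDerivAt (fun s => s * (log s - c - 1)) (log x - c) x := by
  have hf : (fun s => s * (log s - c - 1)) = fun s => s * log s - (c + 1) * s := by
    funext s; ring
  rw [hf]
  exact ((hasDerivAt_mul_log hx).fun_sub ((hasDerivAt_id' x).const_mul (c + 1))).congr_deriv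
    (by ring)

theorem hasDerivAt_sum_mul_log_sub_sub_one {ι : Type*} [Fintype ι] {x : ℝ → ι → ℝ}
    {v : ι → ℝ} {t : ℝ} (hx : HasDerivAt x v t) (hpos : ∀ i, x t i ≠ 0) (c : ι → ℝ) :
    HasDerivAt (fun s => ∑ i, x s i * (log (x s i) - c i - 1))
      (∑ i, v i * (log (x t i) - c i)) t := by
  refine HasDerivAt.fun_sum fun i _ => ?_
  exact ((hasDerivAt_mul_log_sub_sub_one (hpos i) (c i)).comp t
    (hasDerivAt_pi.mp hx i)).congr_deriv (mul_comm _ _)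

open Classical in
/-- Along any positive solution of a mass-action system admitting a complex-balanced steady
state `x*`, the derivative of `L(x) = ∑ i, x i (ln (x i) − ln (x* i) − 1)` equals
`∑_{y→y'} k_{y→y'} x^y ⟨ln x − ln x*, y' − y⟩`, and this quantity is `≤ 0` at every
positive state. -/
theorem lyapunov_derivative_nonpositive
    {n : ℕ} {R : Type*} [Fintype R]
    (src tgt : R → (Fin n → ℝ)) (k : R → ℝ) (hk : ∀ r, 0 < k r)
    (xstar : Fin n → ℝ) (hxstar : ∀ i, 0 < xstar i)
    (hcb : ∀ y : Fin n → ℝ,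
      ∑ r, (if src r = y then k r * ∏ i, xstar i ^ (src r i) else 0)
        = ∑ r, (if tgt r = y then k r * ∏ i, xstar i ^ (src r i) else 0))
    (x : ℝ → (Fin n → ℝ)) (hpos : ∀ t i, 0 < x t i)
    (hode : ∀ t, HasDerivAt x
      (∑ r, (k r * ∏ i, x t i ^ (src r i)) • (tgt r - src r)) t) :
    (∀ t, HasDerivAt (fun s => ∑ i, x s i * (Real.log (x s i) - Real.log (xstar i) - 1))
      (∑ r, (k r * ∏ i, x t i ^ (src r i)) *
        ∑ i, (Real.log (x t i) - Real.log (xstar i)) * (tgt r i - src r i)) t) ∧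
    (∀ z : Fin n → ℝ, (∀ i, 0 < z i) →
      ∑ r, (k r * ∏ i, z i ^ (src r i)) *
        ∑ i, (Real.log (z i) - Real.log (xstar i)) * (tgt r i - src r i) ≤ 0) := by
  refine ⟨fun t => ?_, fun z hz => ?_⟩
  · refine (hasDerivAt_sum_mul_log_sub_sub_one (hode t) (fun i => (hpos t i).ne') _
      ).congr_deriv ?_
    simp only [Finset.sum_apply, Pi.smul_apply, Pi.sub_apply, smul_eq_mul, sum_mul, mul_sum]
    rw [sum_comm]
    exact sum_congr rfl fun r _ => sum_congr rfl fun i _ => by ring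
  · set φ : (Fin n → ℝ) → ℝ := fun y => ∑ i, (log (z i) - log (xstar i)) * y i
    have hflux : ∀ r, (k r * ∏ i, z i ^ (src r i)) *
        ∑ i, (log (z i) - log (xstar i)) * (tgt r i - src r i)
        = (k r * ∏ i, xstar i ^ (src r i)) * (exp (φ (src r)) * (φ (tgt r) - φ (src r))) := by
      intro r
      rw [prod_rpow_eq_prod_rpow_mul_exp hz hxstar, ← sum_sub_distrib]
      simp only [mul_sub]
      ring
    rw [sum_congr rfl fun r _ => hflux r]
    exact sum_mul_exp_mul_sub_nonpos_of_fiber_sums_eq src tgt _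
      (fun r => (mul_pos (hk r) (prod_pos fun i _ => rpow_pos_of_pos (hxstar i) _)).le) hcb φ
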